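/- Let T ≥ 1, let O, O' be m×m unitary matrices over ℂ, let P be an m×m orthogonal projection matrix (Pᴴ = P and P·P = P) with O·(1 − P) = O'·(1 − P), and let U_1, …, U_T be m×m unitary matrices. Define vectors by ψ_0 = φ_0 = v for some vector v : Fin m → ℂ, and ψ_{t+1} = U_{t+1}·O·ψ_t, φ_{t+1} = U_{t+1}·O'·φ_t for 0 ≤ t < T. Then ∑_{t=0}^{T−1} ‖P·ψ_t‖² ≥ ‖ψ_T − φ_T‖² / (4T), where ‖·‖ is the Euclidean norm. -/

import Mathlib

/-- The Euclidean norm of a complex vector. -/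
noncomputable def euclNorm {m : ℕ} (v : Fin m → ℂ) : ℝ :=
  Real.sqrt (∑ i, ‖v i‖ ^ 2)

/-!
Since `O` and `O'` agree on the range of `1 - P`, one has `O x - O' x = O (P x) - O' (P x)`,
hence `‖O x - O' y‖ ≤ ‖x - y‖ + 2 ‖P x‖` for unitary `O`, `O'`. The unitaries `U t` preserve
distances, so the gap `‖ψ t - φ t‖` grows by at most `2 ‖P ψ t‖` per step, which gives
`‖ψ T - φ T‖ ≤ 2 ∑ ‖P ψ t‖`; Cauchy–Schwarz turns this into the bound on `∑ ‖P ψ t‖²`.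
-/

open Matrix Finset

lemma le_sum_of_succ_le_add {α : Type*} [AddCommGroup α] [PartialOrder α]
    [IsOrderedAddMonoid α] {d a : ℕ → α} {T : ℕ} (h0 : d 0 = 0)
    (hstep : ∀ t < T, d (t + 1) ≤ d t + a t) : d T ≤ ∑ t ∈ range T, a t :=
  calc d T = ∑ t ∈ range T, (d (t + 1) - d t) := by rw [sum_range_sub, h0, sub_zero]
    _ ≤ ∑ t ∈ range T, a t :=
      sum_le_sum fun t ht ↦ sub_le_iff_le_add'.2 (hstep t (mem_range.1 ht))

section EuclNorm

variable {m : ℕ}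

lemma euclNorm_eq_norm_toLp (v : Fin m → ℂ) : euclNorm v = ‖WithLp.toLp 2 v‖ := by
  simp [euclNorm, EuclideanSpace.norm_eq]

lemma euclNorm_nonneg (v : Fin m → ℂ) : 0 ≤ euclNorm v :=
  Real.sqrt_nonneg _

lemma euclNorm_sub_le_add (x y : Fin m → ℂ) : euclNorm (x - y) ≤ euclNorm x + euclNorm y := by
  simpa only [euclNorm_eq_norm_toLp, WithLp.toLp_sub] using norm_sub_le _ _

lemma euclNorm_sub_le_sub_add_sub (x y z : Fin m → ℂ) :
    euclNorm (x - z) ≤ euclNorm (x - y) + euclNorm (y - z) := by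
  simpa only [euclNorm_eq_norm_toLp, WithLp.toLp_sub] using
    norm_sub_le_norm_sub_add_norm_sub _ _ _

lemma euclNorm_mulVec_of_mem_unitaryGroup {A : Matrix (Fin m) (Fin m) ℂ}
    (hA : A ∈ unitaryGroup (Fin m) ℂ) (v : Fin m → ℂ) : euclNorm (A *ᵥ v) = euclNorm v := by
  rw [euclNorm_eq_norm_toLp, euclNorm_eq_norm_toLp, ← toEuclideanCLM_toLp]
  exact ContinuousLinearMap.norm_map_of_mem_unitary (Unitary.map_mem toEuclideanCLM hA) _

variable {O O' P : Matrix (Fin m) (Fin m) ℂ}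

lemma mulVec_sub_mulVec_eq_of_mul_sub_eq (hOP : O * (1 - P) = O' * (1 - P)) (x : Fin m → ℂ) :
    O *ᵥ x - O' *ᵥ x = O *ᵥ (P *ᵥ x) - O' *ᵥ (P *ᵥ x) := by
  have h : O *ᵥ ((1 - P) *ᵥ x) = O' *ᵥ ((1 - P) *ᵥ x) := by
    rw [mulVec_mulVec, mulVec_mulVec, hOP]
  rw [sub_mulVec, one_mulVec, mulVec_sub, mulVec_sub] at h
  rw [sub_eq_sub_iff_sub_eq_sub, ← h]

lemma euclNorm_mulVec_sub_mulVec_le (hO : O ∈ unitaryGroup (Fin m) ℂ)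
    (hO' : O' ∈ unitaryGroup (Fin m) ℂ) (hOP : O * (1 - P) = O' * (1 - P))
    (x y : Fin m → ℂ) :
    euclNorm (O *ᵥ x - O' *ᵥ y) ≤ euclNorm (x - y) + 2 * euclNorm (P *ᵥ x) := by
  have hsame : euclNorm (O *ᵥ x - O' *ᵥ x) ≤ 2 * euclNorm (P *ᵥ x) := by
    rw [mulVec_sub_mulVec_eq_of_mul_sub_eq hOP]
    refine (euclNorm_sub_le_add _ _).trans_eq ?_
    rw [euclNorm_mulVec_of_mem_unitaryGroup hO, euclNorm_mulVec_of_mem_unitaryGroup hO',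
      two_mul]
  calc euclNorm (O *ᵥ x - O' *ᵥ y)
      ≤ euclNorm (O *ᵥ x - O' *ᵥ x) + euclNorm (O' *ᵥ x - O' *ᵥ y) :=
        euclNorm_sub_le_sub_add_sub _ _ _
    _ ≤ 2 * euclNorm (P *ᵥ x) + euclNorm (x - y) := by
        rw [← mulVec_sub, euclNorm_mulVec_of_mem_unitaryGroup hO']
        gcongr
    _ = euclNorm (x - y) + 2 * euclNorm (P *ᵥ x) := add_comm _ _

end EuclNorm

theorem hybrid_cauchy_schwarz_general {m T : ℕ}
    (O O' P : Matrix (Fin m) (Fin m) ℂ)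
    (hO : O ∈ Matrix.unitaryGroup (Fin m) ℂ)
    (hO' : O' ∈ Matrix.unitaryGroup (Fin m) ℂ)
    (hOP : O * (1 - P) = O' * (1 - P))
    (U : ℕ → Matrix (Fin m) (Fin m) ℂ)
    (hU : ∀ t, 1 ≤ t → t ≤ T → U t ∈ Matrix.unitaryGroup (Fin m) ℂ)
    (v : Fin m → ℂ) (ψ φ : ℕ → Fin m → ℂ)
    (hψ0 : ψ 0 = v) (hφ0 : φ 0 = v)
    (hψ : ∀ t, t < T → ψ (t + 1) = (U (t + 1)).mulVec (O.mulVec (ψ t)))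
    (hφ : ∀ t, t < T → φ (t + 1) = (U (t + 1)).mulVec (O'.mulVec (φ t))) :
    ∑ t ∈ Finset.range T, euclNorm (P.mulVec (ψ t)) ^ 2
      ≥ euclNorm (ψ T - φ T) ^ 2 / (4 * T) := by
  set S := ∑ t ∈ range T, euclNorm (P *ᵥ ψ t)
  have hgap : euclNorm (ψ T - φ T) ≤ 2 * S := by
    rw [mul_sum]
    refine le_sum_of_succ_le_add (d := fun t ↦ euclNorm (ψ t - φ t))
      (by simp [hψ0, hφ0, euclNorm]) fun t ht ↦ ?_
    rw [hψ t ht, hφ t ht, ← mulVec_sub,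
      euclNorm_mulVec_of_mem_unitaryGroup (hU (t + 1) (by omega) ht)]
    exact euclNorm_mulVec_sub_mulVec_le hO hO' hOP _ _
  have hCS : S ^ 2 ≤ T * ∑ t ∈ range T, euclNorm (P *ᵥ ψ t) ^ 2 := by
    have := sq_sum_le_card_mul_sum_sq (s := range T) (f := fun t ↦ euclNorm (P *ᵥ ψ t))
    rwa [card_range] at this
  refine div_le_of_le_mul₀ (by positivity) (sum_nonneg fun t _ ↦ sq_nonneg _) ?_
  calc euclNorm (ψ T - φ T) ^ 2 ≤ (2 * S) ^ 2 := pow_le_pow_left₀ (euclNorm_nonneg _) hgap 2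
    _ = 4 * S ^ 2 := by ring
    _ ≤ 4 * (T * ∑ t ∈ range T, euclNorm (P *ᵥ ψ t) ^ 2) := by gcongr
    _ = (∑ t ∈ range T, euclNorm (P *ᵥ ψ t) ^ 2) * (4 * T) := by ring

theorem hybrid_cauchy_schwarz {m T : ℕ} (hT : 1 ≤ T)
    (O O' P : Matrix (Fin m) (Fin m) ℂ)
    (hO : O ∈ Matrix.unitaryGroup (Fin m) ℂ)
    (hO' : O' ∈ Matrix.unitaryGroup (Fin m) ℂ)
    (hP1 : P.conjTranspose = P) (hP2 : P * P = P)
    (hOP : O * (1 - P) = O' * (1 - P))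
    (U : ℕ → Matrix (Fin m) (Fin m) ℂ)
    (hU : ∀ t, 1 ≤ t → t ≤ T → U t ∈ Matrix.unitaryGroup (Fin m) ℂ)
    (v : Fin m → ℂ) (ψ φ : ℕ → Fin m → ℂ)
    (hψ0 : ψ 0 = v) (hφ0 : φ 0 = v)
    (hψ : ∀ t, t < T → ψ (t + 1) = (U (t + 1)).mulVec (O.mulVec (ψ t)))
    (hφ : ∀ t, t < T → φ (t + 1) = (U (t + 1)).mulVec (O'.mulVec (φ t))) :
    ∑ t ∈ Finset.range T, euclNorm (P.mulVec (ψ t)) ^ 2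
      ≥ euclNorm (ψ T - φ T) ^ 2 / (4 * T) :=
  hybrid_cauchy_schwarz_general O O' P hO hO' hOP U hU v ψ φ hψ0 hφ0 hψ hφ
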